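/- Let (M, d) be a metric space, γ a ray in M, and γ′ a coray to γ. Then b_γ(γ′(t₂)) − b_γ(γ′(t₁)) = t₁ − t₂ for all t₁, t₂ ≥ 0; equivalently, b_γ(γ′(t)) = b_γ(γ′(0)) − t for all t ≥ 0. -/
import Mathlib


open Filter Topology

variable {M : Type*} [MetricSpace M]

/-- A ray in a metric space: a map `γ` defined (in effect) on `[0, ∞)` with
`d(γ s, γ t) = |s - t|` for all `s, t ≥ 0`. -/
def IsRay (γ : ℝ → M) : Prop :=
  ∀ s t : ℝ, 0 ≤ s → 0 ≤ t → dist (γ s) (γ t) = |s - t|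

/-- A line in a metric space: a map `γ : ℝ → M` with `d(γ s, γ t) = |s - t|`. -/
def IsLine (γ : ℝ → M) : Prop :=
  ∀ s t : ℝ, dist (γ s) (γ t) = |s - t|

/-- The Busemann function of a ray `γ`:
`b_γ(x) = lim_{t → ∞} (d(x, γ t) - t)`, which exists and equals the infimum
since `t ↦ d(x, γ t) - t` is nonincreasing on `[0, ∞)` and bounded below. -/
noncomputable def busemann (γ : ℝ → M) (x : M) : ℝ :=
  ⨅ t : Set.Ici (0 : ℝ), (dist x (γ t) - (t : ℝ))

/-- For a line `γ`, the negative ray `γ⁻(t) = γ(-t)`.  (The positive ray `γ⁺`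
is just `γ` itself, restricted to `[0, ∞)`.) -/
def negRay (γ : ℝ → M) : ℝ → M := fun t => γ (-t)

/-- The barrier function of a line `γ`: `B_γ = b_{γ⁺} + b_{γ⁻}`. -/
noncomputable def barrier (γ : ℝ → M) (x : M) : ℝ :=
  busemann γ x + busemann (negRay γ) x

/-- `γ' ≺ γ`: the barrier of `γ` vanishes at `γ' 0` and both Busemann functions
`b_{γ⁺}`, `b_{γ⁻}` calibrate `γ'` (every forward translate of `γ'` is a coray to
`γ⁺` and every backward translate is a coray to `γ⁻`). -/
def Prec (γ' γ : ℝ → M) : Prop :=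
  busemann γ (γ' 0) + busemann (negRay γ) (γ' 0) = 0 ∧
  ∀ t : ℝ, busemann γ (γ' t) = busemann γ (γ' 0) - t ∧
    busemann (negRay γ) (γ' t) = busemann (negRay γ) (γ' 0) + t

/-- A geodesic metric space: any two points are joined by a minimizing geodesic
segment. -/
def IsGeodesicSpace (M : Type*) [MetricSpace M] : Prop :=
  ∀ x y : M, ∃ σ : ℝ → M, σ 0 = x ∧ σ (dist x y) = y ∧
    ∀ s t : ℝ, s ∈ Set.Icc 0 (dist x y) → t ∈ Set.Icc 0 (dist x y) →
      dist (σ s) (σ t) = |s - t|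

/-- `γ'` is a coray to the ray `γ`: there are `tᵢ → ∞`, points `xᵢ → γ' 0` and
minimal geodesic segments `cᵢ` from `xᵢ` to `γ (tᵢ)` of length `Tᵢ = d(xᵢ, γ tᵢ) → ∞`
converging to `γ'` uniformly on compact subintervals of `[0, ∞)`. -/
def IsCoray (γ' γ : ℝ → M) : Prop :=
  ∃ (t : ℕ → ℝ) (x : ℕ → M) (c : ℕ → ℝ → M),
    (∀ i, 0 ≤ t i) ∧
    Tendsto t atTop atTop ∧
    Tendsto x atTop (𝓝 (γ' 0)) ∧
    (∀ i, c i 0 = x i) ∧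
    (∀ i, c i (dist (x i) (γ (t i))) = γ (t i)) ∧
    (∀ i, ∀ s s' : ℝ, s ∈ Set.Icc 0 (dist (x i) (γ (t i))) →
      s' ∈ Set.Icc 0 (dist (x i) (γ (t i))) → dist (c i s) (c i s') = |s - s'|) ∧
    Tendsto (fun i => dist (x i) (γ (t i))) atTop atTop ∧
    (∀ K > (0 : ℝ), ∀ ε > (0 : ℝ), ∃ N : ℕ, ∀ i ≥ N,
      ∀ s ∈ Set.Icc (0 : ℝ) K, dist (c i s) (γ' s) < ε)

/-- The line `γ` has the uniqueness property: through each point of the zero set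
of `B_γ` there is at most one line `γ''` with `γ'' ≺ γ`. -/
def HasUniqueCalibLine (γ : ℝ → M) : Prop :=
  ∀ x : M, barrier γ x = 0 →
    ∀ γ₁ γ₂ : ℝ → M, IsLine γ₁ → IsLine γ₂ → γ₁ 0 = x → γ₂ 0 = x →
      Prec γ₁ γ → Prec γ₂ γ → γ₁ = γ₂

lemma busemann_bddBelow (γ : ℝ → M) (hγ : IsRay γ) (x : M) :
    BddBelow (Set.range fun t : Set.Ici (0 : ℝ) => dist x (γ t) - (t : ℝ)) := by
  refine ⟨-dist x (γ 0), ?_⟩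
  rintro r ⟨⟨t, ht⟩, rfl⟩
  have h1 : dist (γ 0) (γ t) = |0 - t| := hγ 0 t le_rfl ht
  have h2 : |0 - t| = t := by rw [abs_sub_comm, sub_zero, abs_of_nonneg ht]
  have h3 := dist_triangle (γ 0) x (γ t)
  rw [dist_comm (γ 0) x] at h3
  simp only
  linarith [h1, h2, h3]

lemma busemann_le (γ : ℝ → M) (hγ : IsRay γ) (x : M) {t : ℝ} (ht : 0 ≤ t) :
    busemann γ x ≤ dist x (γ t) - t :=
  ciInf_le (busemann_bddBelow γ hγ x) ⟨t, ht⟩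

lemma busemann_lip (γ : ℝ → M) (hγ : IsRay γ) (x y : M) :
    busemann γ x ≤ busemann γ y + dist x y := by
  haveI : Nonempty (Set.Ici (0 : ℝ)) := ⟨⟨0, Set.self_mem_Ici⟩⟩
  have h : busemann γ x - dist x y ≤ busemann γ y := by
    refine le_ciInf fun ⟨t, ht⟩ => ?_
    have h1 := busemann_le γ hγ x ht
    have h2 := dist_triangle x y (γ t)
    simp only
    linarith
  linarith

lemma busemann_anti (γ : ℝ → M) (hγ : IsRay γ) (x : M) {s t : ℝ}
    (hs : 0 ≤ s) (hst : s ≤ t) : dist x (γ t) - t ≤ dist x (γ s) - s := by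
  have h1 : dist (γ s) (γ t) = |s - t| := hγ s t hs (hs.trans hst)
  have h2 : |s - t| = t - s := by rw [abs_sub_comm, abs_of_nonneg (by linarith)]
  have h3 := dist_triangle x (γ s) (γ t)
  linarith

/-- a coray `γ'` to `γ` is calibrated by the Busemann function of
`γ`: `b_γ(γ' t₂) - b_γ(γ' t₁) = t₁ - t₂` for `t₁, t₂ ≥ 0`; equivalently
`b_γ(γ' t) = b_γ(γ' 0) - t` for `t ≥ 0`. -/
theorem coray_calibrated (γ γ' : ℝ → M)
    (hγ : IsRay γ) (hγ' : IsRay γ') (hc : IsCoray γ' γ) :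
    (∀ t₁ t₂ : ℝ, 0 ≤ t₁ → 0 ≤ t₂ →
      busemann γ (γ' t₂) - busemann γ (γ' t₁) = t₁ - t₂) ∧
    (∀ t : ℝ, 0 ≤ t → busemann γ (γ' t) = busemann γ (γ' 0) - t) := by
  haveI : Nonempty (Set.Ici (0 : ℝ)) := ⟨⟨0, Set.self_mem_Ici⟩⟩
  obtain ⟨t, x, c, ht0, htt, hx, hc0, hcT, hcseg, hT, hconv⟩ := hc
  have key : ∀ s : ℝ, 0 ≤ s → busemann γ (γ' s) = busemann γ (γ' 0) - s := by
    intro s hs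
    have upper : busemann γ (γ' s) ≤ busemann γ (γ' 0) - s := by
      refine le_of_forall_pos_le_add fun ε hε => ?_
      -- choose t₀ with dist (γ' 0) (γ t₀) - t₀ < b(γ' 0) + ε/4
      have hlt : busemann γ (γ' 0) < busemann γ (γ' 0) + ε / 4 := by linarith
      obtain ⟨⟨t₀, ht₀⟩, h₀⟩ := exists_lt_of_ciInf_lt hlt
      simp only at h₀
      -- eventually conditions
      have hA : ∀ᶠ i in atTop, t₀ ≤ t i := htt.eventually_ge_atTop t₀
      have hB : ∀ᶠ i in atTop, dist (x i) (γ' 0) < ε / 4 := by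
        have := Metric.tendsto_nhds.mp hx (ε / 4) (by linarith)
        exact this.mono fun i h => by rwa [dist_comm] at h ⊢
      have hC : ∀ᶠ i in atTop, s ≤ dist (x i) (γ (t i)) := hT.eventually_ge_atTop s
      obtain ⟨N, hN⟩ := hconv (s + 1) (by linarith) (ε / 4) (by linarith)
      have hD : ∀ᶠ i in atTop, dist (c i s) (γ' s) < ε / 4 :=
        eventually_atTop.mpr ⟨N, fun i hi => hN i hi s ⟨hs, by linarith⟩⟩
      obtain ⟨i, ⟨⟨hAi, hBi⟩, hCi⟩, hDi⟩ := (((hA.and hB).and hC).and hD).exists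
      set T := dist (x i) (γ (t i)) with hTdef
      -- dist (c i s) (γ (t i)) = T - s
      have hseg : dist (c i s) (γ (t i)) = T - s := by
        have := hcseg i s T ⟨hs, hCi⟩ ⟨dist_nonneg, le_rfl⟩
        rw [hcT i] at this
        rw [this, abs_of_nonpos (by linarith), neg_sub]
      -- b(c i s) ≤ T - s - t i
      have h1 : busemann γ (c i s) ≤ T - s - t i := by
        have := busemann_le γ hγ (c i s) (ht0 i)
        rw [hseg] at this; linarith
      -- T - t i ≤ dist (γ' 0) (γ (t i)) - t i + ε/4 ≤ b(γ'0) + ε/2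
      have h2 : dist (γ' 0) (γ (t i)) - t i ≤ dist (γ' 0) (γ t₀) - t₀ :=
        busemann_anti γ hγ (γ' 0) ht₀ hAi
      have h3 : T ≤ dist (x i) (γ' 0) + dist (γ' 0) (γ (t i)) :=
        dist_triangle _ _ _
      have h4 : busemann γ (γ' s) ≤ busemann γ (c i s) + dist (γ' s) (c i s) :=
        busemann_lip γ hγ _ _
      rw [dist_comm] at h4
      linarith
    have lower : busemann γ (γ' 0) ≤ busemann γ (γ' s) + s := by
      have h := busemann_lip γ hγ (γ' 0) (γ' s)
      have hd : dist (γ' 0) (γ' s) = s := by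
        rw [hγ' 0 s le_rfl hs, abs_sub_comm, sub_zero, abs_of_nonneg hs]
      rw [hd] at h; exact h
    linarith
  refine ⟨fun t₁ t₂ h₁ h₂ => ?_, key⟩
  rw [key t₁ h₁, key t₂ h₂]; ring
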